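/- If n and k are relatively prime with 1 ≤ k ≤ n-3 and n ≥ 4, then T_{n,2,k} is isomorphic to T_{2n,1,2p}, where p ∈ {1,...,n-2} satisfies pk ≡ 1 (mod n), via the map u_i ↦ 1 + 2p(i-1), v_i ↦ 2 + 2p(i-1) (mod 2n). -/
import Mathlib


/-- The faces of the triangulation `T_{N,1,j}` of the torus. -/
def Tfaces (N j : ℕ) : Set (Finset (ZMod N)) :=
  {F | ∃ i : ZMod N,
    F = ({i, i + (j : ZMod N), i + (j : ZMod N) + 1} : Finset (ZMod N)) ∨
    F = ({i, i + 1, i + (j : ZMod N) + 1} : Finset (ZMod N))}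

/-- The faces of the triangulation `T_{n,2,k}` of the torus, on vertices
`u_i = Sum.inl i`, `v_i = Sum.inr i`. -/
def T2faces (n k : ℕ) : Set (Finset (ZMod n ⊕ ZMod n)) :=
  {F | ∃ i : ZMod n,
    F = ({Sum.inl i, Sum.inl (i + 1), Sum.inr (i + 1)} : Finset (ZMod n ⊕ ZMod n)) ∨
    F = ({Sum.inl i, Sum.inr i, Sum.inr (i + 1)} : Finset (ZMod n ⊕ ZMod n)) ∨
    F = ({Sum.inl (i + (k : ZMod n)), Sum.inl (i + (k : ZMod n) + 1), Sum.inr i} :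
          Finset (ZMod n ⊕ ZMod n)) ∨
    F = ({Sum.inl (i + (k : ZMod n) + 1), Sum.inr i, Sum.inr (i + 1)} :
          Finset (ZMod n ⊕ ZMod n))}

/-- The map `u_i ↦ 1 + 2p(i-1)`, `v_i ↦ 2 + 2p(i-1)` (mod `2n`). -/
def phiT2 (n p : ℕ) : ZMod n ⊕ ZMod n → ZMod (2 * n) := fun x =>
  match x with
  | Sum.inl i => 1 + 2 * (p : ZMod (2 * n)) * ((i.val : ZMod (2 * n)) - 1)
  | Sum.inr i => 2 + 2 * (p : ZMod (2 * n)) * ((i.val : ZMod (2 * n)) - 1)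

lemma phi_key (n p : ℕ) [NeZero n] (x : ℕ) :
    2 * (p : ZMod (2*n)) * (((x : ZMod n)).val : ZMod (2*n)) = 2 * p * (x : ZMod (2*n)) := by
  rw [ZMod.val_natCast]
  conv_rhs => rw [← Nat.div_add_mod x n]
  have h0 : ((2*n : ℕ) : ZMod (2*n)) = 0 := ZMod.natCast_self _
  push_cast at h0 ⊢
  linear_combination (-(p : ZMod (2*n)) * ((x / n : ℕ) : ZMod (2*n))) * h0

lemma phi_shift_inl (n p : ℕ) [NeZero n] (i : ZMod n) (m : ℕ) :
    phiT2 n p (Sum.inl (i + (m : ZMod n))) =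
      phiT2 n p (Sum.inl i) + 2 * (p : ZMod (2*n)) * m := by
  have h1 : i + (m : ZMod n) = ((i.val + m : ℕ) : ZMod n) := by
    rw [Nat.cast_add, ZMod.natCast_val, ZMod.cast_id]
  have h2 := phi_key n p (i.val + m)
  have h3 : ((i.val : ZMod n)) = i := by rw [ZMod.natCast_val, ZMod.cast_id]
  have h4 := phi_key n p i.val
  rw [h3] at h4
  show 1 + 2 * (p : ZMod (2*n)) * (((i + (m : ZMod n)).val : ZMod (2*n)) - 1)
      = 1 + 2 * (p : ZMod (2*n)) * ((i.val : ZMod (2*n)) - 1) + 2 * (p : ZMod (2*n)) * m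
  rw [h1]
  push_cast at h2 ⊢
  linear_combination h2 - h4

lemma phi_t_inj (n p k : ℕ) [NeZero n] (hpk : p * k ≡ 1 [MOD n])
    (i i' : ZMod n)
    (h : 2 * (p : ZMod (2*n)) * ((i.val : ZMod (2*n)) - 1)
       = 2 * (p : ZMod (2*n)) * ((i'.val : ZMod (2*n)) - 1)) : i = i' := by
  have h1 : ((2*(p*i.val) : ℕ) : ZMod (2*n)) = ((2*(p*i'.val) : ℕ) : ZMod (2*n)) := by
    push_cast
    linear_combination h
  rw [ZMod.natCast_eq_natCast_iff] at h1
  have h2 : (p*i.val) % n = (p*i'.val) % n := by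
    have h1' : (2*(p*i.val)) % (2*n) = (2*(p*i'.val)) % (2*n) := h1
    rw [Nat.mul_mod_mul_left, Nat.mul_mod_mul_left] at h1'
    omega
  have h3 : i.val % n = i'.val % n := by
    have ha : (p*i.val*k) % n = (p*i'.val*k) % n := Nat.ModEq.mul_right k h2
    have hb : (p*k*i.val) % n = (1*i.val) % n := Nat.ModEq.mul_right i.val hpk
    have hc : (p*k*i'.val) % n = (1*i'.val) % n := Nat.ModEq.mul_right i'.val hpk
    have e1 : p*i.val*k = p*k*i.val := by ring
    have e2 : p*i'.val*k = p*k*i'.val := by ring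
    rw [e1, e2, hb, hc] at ha
    simpa using ha
  have h4 : i.val = i'.val := by
    rwa [Nat.mod_eq_of_lt (ZMod.val_lt i), Nat.mod_eq_of_lt (ZMod.val_lt i')] at h3
  have : ((i.val : ℕ) : ZMod n) = ((i'.val : ℕ) : ZMod n) := by rw [h4]
  rwa [ZMod.natCast_val, ZMod.cast_id, ZMod.natCast_val, ZMod.cast_id] at this

lemma phi_parity (n p : ℕ) (hn : 4 ≤ n) (i i' : ZMod n)
    (h : phiT2 n p (Sum.inl i) = phiT2 n p (Sum.inr i')) : False := by
  haveI : NeZero (2*n) := ⟨by omega⟩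
  set z : ZMod (2*n) := (p : ZMod (2*n)) * ((i.val : ZMod (2*n)) - 1)
      - (p : ZMod (2*n)) * ((i'.val : ZMod (2*n)) - 1) with hz
  have h1 : (1 : ZMod (2*n)) = 2 * z := by
    have h' : 1 + 2 * (p : ZMod (2*n)) * ((i.val : ZMod (2*n)) - 1)
        = 2 + 2 * (p : ZMod (2*n)) * ((i'.val : ZMod (2*n)) - 1) := h
    rw [hz]; linear_combination -h'
  have h2 : ((1:ℕ) : ZMod (2*n)) = ((2*z.val : ℕ) : ZMod (2*n)) := by
    push_cast [ZMod.natCast_val, ZMod.cast_id]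
    linear_combination h1
  rw [ZMod.natCast_eq_natCast_iff] at h2
  have h3 : 1 % (2*n) = (2*z.val) % (2*n) := h2
  rw [Nat.mul_mod_mul_left] at h3
  have h4 : 1 % (2*n) = 1 := Nat.mod_eq_of_lt (by omega)
  omega

/-- If `gcd(n,k) = 1` with `1 ≤ k ≤ n-3`, `n ≥ 4`, and `p ∈ {1,…,n-2}` satisfies
`p·k ≡ 1 (mod n)`, then `u_i ↦ 1+2p(i-1)`, `v_i ↦ 2+2p(i-1)` is a simplicial
isomorphism from `T_{n,2,k}` onto `T_{2n,1,2p}`. -/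
theorem T2_iso_T1 (n k p : ℕ) (hn : 4 ≤ n) (hk1 : 1 ≤ k) (hk2 : k ≤ n - 3)
    (hcop : Nat.Coprime n k) (hp1 : 1 ≤ p) (hp2 : p ≤ n - 2)
    (hpk : p * k ≡ 1 [MOD n]) :
    Function.Bijective (phiT2 n p) ∧
    ∀ F : Finset (ZMod n ⊕ ZMod n),
      F ∈ T2faces n k ↔ F.image (phiT2 n p) ∈ Tfaces (2 * n) (2 * p) := by
  haveI : NeZero n := ⟨by omega⟩
  haveI : NeZero (2*n) := ⟨by omega⟩
  set φ := phiT2 n p with hφ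
  -- injectivity
  have hinj : Function.Injective φ := by
    rintro (i|i) (i'|i') h
    · have h' : 1 + 2 * (p : ZMod (2*n)) * ((i.val : ZMod (2*n)) - 1)
          = 1 + 2 * (p : ZMod (2*n)) * ((i'.val : ZMod (2*n)) - 1) := h
      exact congrArg Sum.inl (phi_t_inj n p k hpk i i' (by linear_combination h'))
    · exact absurd h (fun h => phi_parity n p hn i i' h)
    · exact absurd h.symm (fun h => phi_parity n p hn i' i h)
    · have h' : 2 + 2 * (p : ZMod (2*n)) * ((i.val : ZMod (2*n)) - 1)
          = 2 + 2 * (p : ZMod (2*n)) * ((i'.val : ZMod (2*n)) - 1) := h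
      exact congrArg Sum.inr (phi_t_inj n p k hpk i i' (by linear_combination h'))
  have hbij : Function.Bijective φ := by
    rw [Fintype.bijective_iff_injective_and_card]
    refine ⟨hinj, ?_⟩
    rw [Fintype.card_sum, ZMod.card, ZMod.card]
    ring
  -- arithmetic identities
  have h2pk : 2 * (p : ZMod (2*n)) * (k : ZMod (2*n)) = 2 := by
    have h1 : (p*k) % n = 1 % n := hpk
    have h1' : 1 % n = 1 := Nat.mod_eq_of_lt (by omega)
    have hdm := Nat.div_add_mod (p*k) n
    obtain ⟨t, ht⟩ : ∃ t, p * k = n * t + 1 := ⟨(p*k)/n, by omega⟩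
    have h0 : ((2*n : ℕ) : ZMod (2*n)) = 0 := ZMod.natCast_self _
    have hc : ((p*k : ℕ) : ZMod (2*n)) = ((n*t+1 : ℕ) : ZMod (2*n)) := by rw [ht]
    push_cast at hc h0
    linear_combination 2 * hc + t * h0
  have hA1 : ∀ i : ZMod n, φ (Sum.inl (i+1)) = φ (Sum.inl i) + ((2*p : ℕ) : ZMod (2*n)) := by
    intro i
    have := phi_shift_inl n p i 1
    rw [Nat.cast_one] at this
    rw [hφ, this]
    push_cast
    ring
  have hB : ∀ i : ZMod n, φ (Sum.inr i) = φ (Sum.inl i) + 1 := by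
    intro i
    show 2 + 2 * (p : ZMod (2*n)) * ((i.val : ZMod (2*n)) - 1)
        = 1 + 2 * (p : ZMod (2*n)) * ((i.val : ZMod (2*n)) - 1) + 1
    ring
  have hAk : ∀ i : ZMod n, φ (Sum.inl (i + (k : ZMod n))) = φ (Sum.inl i) + 2 := by
    intro i
    have h := phi_shift_inl n p i k
    rw [hφ, h, h2pk]
  have hAk1 : ∀ i : ZMod n, φ (Sum.inl (i + (k : ZMod n) + 1))
      = φ (Sum.inl i) + 2 + ((2*p : ℕ) : ZMod (2*n)) := by
    intro i
    rw [hA1 (i + (k : ZMod n)), hAk i]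
  have hB1 : ∀ i : ZMod n, φ (Sum.inr (i+1)) = φ (Sum.inl i) + 1 + ((2*p : ℕ) : ZMod (2*n)) := by
    intro i
    rw [hB (i+1), hA1 i]
    ring
  -- image computations
  have himg1 : ∀ i : ZMod n,
      ({Sum.inl i, Sum.inl (i+1), Sum.inr (i+1)} : Finset (ZMod n ⊕ ZMod n)).image φ
      = ({φ (Sum.inl i), φ (Sum.inl i) + ((2*p : ℕ) : ZMod (2*n)),
          φ (Sum.inl i) + ((2*p : ℕ) : ZMod (2*n)) + 1} : Finset (ZMod (2*n))) := by
    intro i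
    rw [Finset.image_insert, Finset.image_insert, Finset.image_singleton, hA1 i, hB1 i]
    ext x
    simp only [Finset.mem_insert, Finset.mem_singleton]
    constructor <;> rintro (rfl|rfl|rfl) <;>
      first | (left; ring1) | (right; left; ring1) | (right; right; ring1)
  have himg2 : ∀ i : ZMod n,
      ({Sum.inl i, Sum.inr i, Sum.inr (i+1)} : Finset (ZMod n ⊕ ZMod n)).image φ
      = ({φ (Sum.inl i), φ (Sum.inl i) + 1,
          φ (Sum.inl i) + ((2*p : ℕ) : ZMod (2*n)) + 1} : Finset (ZMod (2*n))) := by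
    intro i
    rw [Finset.image_insert, Finset.image_insert, Finset.image_singleton, hB i, hB1 i]
    ext x
    simp only [Finset.mem_insert, Finset.mem_singleton]
    constructor <;> rintro (rfl|rfl|rfl) <;>
      first | (left; ring1) | (right; left; ring1) | (right; right; ring1)
  have himg3 : ∀ i : ZMod n,
      ({Sum.inl (i + (k : ZMod n)), Sum.inl (i + (k : ZMod n) + 1), Sum.inr i} :
          Finset (ZMod n ⊕ ZMod n)).image φ
      = ({φ (Sum.inr i), φ (Sum.inr i) + 1,
          φ (Sum.inr i) + ((2*p : ℕ) : ZMod (2*n)) + 1} : Finset (ZMod (2*n))) := by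
    intro i
    rw [Finset.image_insert, Finset.image_insert, Finset.image_singleton,
      hAk i, hAk1 i, hB i]
    ext x
    simp only [Finset.mem_insert, Finset.mem_singleton]
    constructor <;> rintro (rfl|rfl|rfl) <;>
      first | (left; ring1) | (right; left; ring1) | (right; right; ring1)
  have himg4 : ∀ i : ZMod n,
      ({Sum.inl (i + (k : ZMod n) + 1), Sum.inr i, Sum.inr (i+1)} :
          Finset (ZMod n ⊕ ZMod n)).image φ
      = ({φ (Sum.inr i), φ (Sum.inr i) + ((2*p : ℕ) : ZMod (2*n)),
          φ (Sum.inr i) + ((2*p : ℕ) : ZMod (2*n)) + 1} : Finset (ZMod (2*n))) := by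
    intro i
    rw [Finset.image_insert, Finset.image_insert, Finset.image_singleton,
      hAk1 i, hB i, hB1 i]
    ext x
    simp only [Finset.mem_insert, Finset.mem_singleton]
    constructor <;> rintro (rfl|rfl|rfl) <;>
      first | (left; ring1) | (right; left; ring1) | (right; right; ring1)
  refine ⟨hbij, fun F => ⟨?_, ?_⟩⟩
  · rintro ⟨i, h|h|h|h⟩
    · rw [h, himg1 i]; exact ⟨φ (Sum.inl i), Or.inl rfl⟩
    · rw [h, himg2 i]; exact ⟨φ (Sum.inl i), Or.inr rfl⟩
    · rw [h, himg3 i]; exact ⟨φ (Sum.inr i), Or.inr rfl⟩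
    · rw [h, himg4 i]; exact ⟨φ (Sum.inr i), Or.inl rfl⟩
  · rintro ⟨c, hc|hc⟩ <;> obtain ⟨x, rfl⟩ := hbij.2 c <;> rcases x with i|i
    · exact ⟨i, Or.inl (Finset.image_injective hinj (hc.trans (himg1 i).symm))⟩
    · exact ⟨i, Or.inr (Or.inr (Or.inr
        (Finset.image_injective hinj (hc.trans (himg4 i).symm))))⟩
    · exact ⟨i, Or.inr (Or.inl (Finset.image_injective hinj (hc.trans (himg2 i).symm)))⟩
    · exact ⟨i, Or.inr (Or.inr (Or.inl
        (Finset.image_injective hinj (hc.trans (himg3 i).symm))))⟩
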